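/- Let 𝒴 ⊂ ℝ^m be a finite nonempty set, let c ∈ ℝ, w ∈ ℝ^m, and let m₁, m₂ be positive integers with m₂ dividing m₁. Let z be a standard Gaussian random vector in ℝ^m. For a tuple (y₁,…,y_{m₁}) ∈ 𝒴^{m₁} and 1 ≤ i ≤ m₁/m₂, write S_i = Σ_{j=(i−1)m₂+1}^{i·m₂} y_j and S = Σ_{j=1}^{m₁} y_j. Then Σ_{(y₁,…,y_{m₁}) ∈ 𝒴^{m₁}} exp((c²/2)·Σ_{i=1}^{m₁/m₂} ‖S_i‖₂² + Sᵀw) = (E_z[(Σ_{y ∈ 𝒴} exp(yᵀ(c·z + w)))^{m₂}])^{m₁/m₂}. -/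

import Mathlib

/-!
Integrating `exp ⟪S, c z + w⟫` against the standard Gaussian gives `exp (c²/2 ‖S‖² + ⟪S, w⟫)`
(the Gaussian moment generating function). Expanding the `m₂`-th power of the partition function
into a sum over `𝒴^{m₂}` therefore computes the expectation on the right as a sum over a single
block. On the left, cutting `Fin m₁` into `m₁ / m₂` consecutive blocks of length `m₂` turns the
exponent into a sum of such single-block exponents, so the sum over `𝒴^{m₁}` factorizes into the
`(m₁ / m₂)`-th power of the single-block sum.
-/

open MeasureTheory ProbabilityTheory Finset

section Gaussian

variable {ι : Type*} [Fintype ι] (μ : ℝ) (v : NNReal)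

lemma integral_exp_mul_gaussianReal (t : ℝ) :
    ∫ x, Real.exp (t * x) ∂gaussianReal μ v = Real.exp (μ * t + v * t ^ 2 / 2) :=
  congrFun mgf_fun_id_gaussianReal t

lemma integrable_exp_sum_mul_pi_gaussianReal (t : ι → ℝ) :
    Integrable (fun z : ι → ℝ => Real.exp (∑ a, t a * z a))
      (Measure.pi fun _ => gaussianReal μ v) := by
  simp_rw [Real.exp_sum]
  exact Integrable.fintype_prod fun a => integrable_exp_mul_gaussianReal (t a)

lemma integral_exp_sum_mul_pi_gaussianReal (t : ι → ℝ) :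
    ∫ z : ι → ℝ, Real.exp (∑ a, t a * z a) ∂(Measure.pi fun _ => gaussianReal μ v) =
      Real.exp (∑ a, (μ * t a + v * t a ^ 2 / 2)) := by
  simp_rw [Real.exp_sum, integral_fintype_prod_eq_prod (fun a x => Real.exp (t a * x)),
    integral_exp_mul_gaussianReal]

end Gaussian

section HubbardStratonovich

variable {ι : Type*} [Fintype ι]

lemma exp_sum_mul_affine (c : ℝ) (w S z : ι → ℝ) :
    Real.exp (∑ a, S a * (c * z a + w a)) =
      Real.exp (∑ a, S a * w a) * Real.exp (∑ a, c * S a * z a) := by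
  rw [← Real.exp_add, ← sum_add_distrib]
  congr 1
  exact sum_congr rfl fun a _ => by ring

theorem integral_exp_sum_mul_affine_pi_gaussianReal (c : ℝ) (w S : ι → ℝ) :
    ∫ z : ι → ℝ, Real.exp (∑ a, S a * (c * z a + w a)) ∂(Measure.pi fun _ => gaussianReal 0 1) =
      Real.exp (c ^ 2 / 2 * ∑ a, S a ^ 2 + ∑ a, S a * w a) := by
  simp_rw [exp_sum_mul_affine, integral_const_mul, integral_exp_sum_mul_pi_gaussianReal,
    ← Real.exp_add]
  congr 1
  simp only [zero_mul, zero_add, NNReal.coe_one, one_mul, mul_sum]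
  rw [add_comm]
  congr 1
  exact sum_congr rfl fun a _ => by ring

theorem integrable_exp_sum_mul_affine_pi_gaussianReal (c : ℝ) (w S : ι → ℝ) :
    Integrable (fun z : ι → ℝ => Real.exp (∑ a, S a * (c * z a + w a)))
      (Measure.pi fun _ => gaussianReal 0 1) := by
  simp_rw [exp_sum_mul_affine]
  exact (integrable_exp_sum_mul_pi_gaussianReal 0 1 _).const_mul _

theorem integral_sum_exp_pow_pi_gaussianReal (𝒴 : Finset (ι → ℝ)) (c : ℝ) (w : ι → ℝ) (n : ℕ) :
    ∫ z : ι → ℝ, (∑ y ∈ 𝒴, Real.exp (∑ a, y a * (c * z a + w a))) ^ n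
        ∂(Measure.pi fun _ => gaussianReal 0 1) =
      ∑ p ∈ Fintype.piFinset (fun _ : Fin n => 𝒴),
        Real.exp (c ^ 2 / 2 * ∑ a, (∑ j, p j a) ^ 2 + ∑ a, (∑ j, p j a) * w a) := by
  have expand (z : ι → ℝ) : (∑ y ∈ 𝒴, Real.exp (∑ a, y a * (c * z a + w a))) ^ n =
      ∑ p ∈ Fintype.piFinset (fun _ : Fin n => 𝒴),
        Real.exp (∑ a, (∑ j, p j a) * (c * z a + w a)) := by
    rw [sum_pow']
    refine sum_congr rfl fun p _ => ?_
    rw [← Real.exp_sum, sum_comm]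
    simp_rw [sum_mul]
  simp_rw [expand]
  rw [integral_finsetSum _ fun p _ => integrable_exp_sum_mul_affine_pi_gaussianReal c w _]
  exact sum_congr rfl fun p _ => integral_exp_sum_mul_affine_pi_gaussianReal c w _

end HubbardStratonovich

theorem Finset.sum_piFinset_prod_comp_equiv {ι κ μ α β : Type*} [Fintype ι] [Fintype κ]
    [Fintype μ] [DecidableEq ι] [DecidableEq κ] [DecidableEq μ] [CommSemiring β]
    (e : κ × μ ≃ ι) (s : Finset α) (h : κ → (μ → α) → β) :
    ∑ Y ∈ Fintype.piFinset (fun _ : ι => s), ∏ i, h i (fun j => Y (e (i, j))) =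
      ∏ i, ∑ p ∈ Fintype.piFinset (fun _ : μ => s), h i p := by
  rw [← sum_prod_piFinset]
  refine sum_equiv ((e.arrowCongr (Equiv.refl α)).symm.trans (Equiv.curry κ μ α)) ?_ ?_
  · intro Y
    simp [Fintype.mem_piFinset, ← e.forall_congr_right]
  · intro Y _
    rfl

/-- `finBlockEquiv h (i, j) = i * n + j`: the blocks are runs of `n` consecutive indices. -/
def finBlockEquiv {k n m : ℕ} (h : k * n = m) : Fin k × Fin n ≃ Fin m :=
  finProdFinEquiv.trans (finCongr h)

lemma finBlockEquiv_apply_val_div {k n m : ℕ} (h : k * n = m) (p : Fin k × Fin n) :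
    (finBlockEquiv h p : ℕ) / n = p.1 := by
  change (p.2 + n * p.1 : ℕ) / n = p.1
  rw [Nat.add_mul_div_left _ _ p.2.pos, Nat.div_eq_of_lt p.2.2, zero_add]

lemma sum_filter_div_eq_sum_finBlockEquiv {M : Type*} [AddCommMonoid M] {k n m : ℕ}
    (h : k * n = m) (f : Fin m → M) (i : Fin k) :
    ∑ j ∈ univ.filter (fun j : Fin m => (j : ℕ) / n = i), f j =
      ∑ j : Fin n, f (finBlockEquiv h (i, j)) := by
  rw [sum_filter, ← (finBlockEquiv h).sum_comp, Fintype.sum_prod_type]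
  simp [finBlockEquiv_apply_val_div, Fin.val_inj]

lemma sum_eq_sum_sum_finBlockEquiv {M : Type*} [AddCommMonoid M] {k n m : ℕ}
    (h : k * n = m) (f : Fin m → M) :
    ∑ j, f j = ∑ i, ∑ j, f (finBlockEquiv h (i, j)) := by
  rw [← (finBlockEquiv h).sum_comp, Fintype.sum_prod_type]

theorem hubbard_stratonovich_two_level_general (m m₁ m₂ : ℕ)
    (hdvd : m₂ ∣ m₁) (𝒴 : Finset (Fin m → ℝ)) (c : ℝ) (w : Fin m → ℝ) :
    (∑ Y ∈ Fintype.piFinset (fun _ : Fin m₁ => 𝒴),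
        Real.exp (c ^ 2 / 2 *
            (∑ i ∈ Finset.range (m₁ / m₂),
              ∑ a : Fin m,
                (∑ j ∈ Finset.univ.filter (fun j : Fin m₁ => (j : ℕ) / m₂ = i), Y j a) ^ 2) +
          ∑ a : Fin m, (∑ j : Fin m₁, Y j a) * w a)) =
      (∫ z : Fin m → ℝ,
          (∑ y ∈ 𝒴, Real.exp (∑ a : Fin m, y a * (c * z a + w a))) ^ m₂
          ∂(Measure.pi fun _ : Fin m => gaussianReal 0 1)) ^ (m₁ / m₂) := by
  have hk : m₁ / m₂ * m₂ = m₁ := Nat.div_mul_cancel hdvd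
  set e := finBlockEquiv hk
  have blocks (Y : Fin m₁ → Fin m → ℝ) :
      c ^ 2 / 2 * (∑ i ∈ range (m₁ / m₂), ∑ a : Fin m,
          (∑ j ∈ univ.filter (fun j : Fin m₁ => (j : ℕ) / m₂ = i), Y j a) ^ 2) +
        ∑ a : Fin m, (∑ j : Fin m₁, Y j a) * w a =
      ∑ i, (c ^ 2 / 2 * ∑ a, (∑ j, Y (e (i, j)) a) ^ 2 + ∑ a, (∑ j, Y (e (i, j)) a) * w a) := by
    simp_rw [← Fin.sum_univ_eq_sum_range, sum_filter_div_eq_sum_finBlockEquiv hk,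
      sum_eq_sum_sum_finBlockEquiv hk (fun j => Y j _), sum_add_distrib, mul_sum, sum_mul]
    rw [sum_comm (s := univ (α := Fin m))]
  simp_rw [integral_sum_exp_pow_pi_gaussianReal, blocks, Real.exp_sum]
  rw [sum_piFinset_prod_comp_equiv e 𝒴
      (fun _ p => Real.exp (c ^ 2 / 2 * ∑ a, (∑ j, p j a) ^ 2 + ∑ a, (∑ j, p j a) * w a)),
    prod_const, card_univ, Fintype.card_fin]

/-- **Two-level (block) Hubbard–Stratonovich decoupling identity.**
For a finite nonempty `𝒴 ⊂ ℝᵐ`, `c ∈ ℝ`, `w ∈ ℝᵐ`, and `m₂ ∣ m₁`, with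
`S_i = Σ_{j in the i-th block of size m₂} y_j` and `S = Σ_{j=1}^{m₁} y_j`,
`Σ_{(y₁,…,y_{m₁}) ∈ 𝒴^{m₁}} exp((c²/2)·Σ_{i=1}^{m₁/m₂} ‖S_i‖₂² + Sᵀw)
  = (E_z[(Σ_{y ∈ 𝒴} exp(yᵀ(c z + w)))^{m₂}])^{m₁/m₂}`. -/
theorem hubbard_stratonovich_two_level (m m₁ m₂ : ℕ) (hm₁ : 0 < m₁) (hm₂ : 0 < m₂)
    (hdvd : m₂ ∣ m₁) (𝒴 : Finset (Fin m → ℝ)) (h𝒴 : 𝒴.Nonempty) (c : ℝ) (w : Fin m → ℝ) :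
    (∑ Y ∈ Fintype.piFinset (fun _ : Fin m₁ => 𝒴),
        Real.exp (c ^ 2 / 2 *
            (∑ i ∈ Finset.range (m₁ / m₂),
              ∑ a : Fin m,
                (∑ j ∈ Finset.univ.filter (fun j : Fin m₁ => (j : ℕ) / m₂ = i), Y j a) ^ 2) +
          ∑ a : Fin m, (∑ j : Fin m₁, Y j a) * w a)) =
      (∫ z : Fin m → ℝ,
          (∑ y ∈ 𝒴, Real.exp (∑ a : Fin m, y a * (c * z a + w a))) ^ m₂
          ∂(Measure.pi fun _ : Fin m => gaussianReal 0 1)) ^ (m₁ / m₂) :=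
  hubbard_stratonovich_two_level_general m m₁ m₂ hdvd 𝒴 c w
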